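/- The linear operator 𝓛_K^* 𝓛_K: R^{v(v−1)/2} → R^{v(v−1)/2} has operator norm (largest eigenvalue) at most 2nv; equivalently ‖𝓛_K(w)‖_F² ≤ 2nv ‖w‖² for all w. -/
import Mathlib

open Matrix Finset

/-- Index set of the `v(v-1)/2` unordered pairs, represented as pairs `(i, j)` with `i > j`. -/
def PairIdx (v : ℕ) := {p : Fin v × Fin v // p.2 < p.1}

instance (v : ℕ) : Fintype (PairIdx v) := Subtype.fintype _

/-- Symmetric weight function associated with a weight vector over pairs `i > j`. -/
def wsym {v : ℕ} (w : PairIdx v → ℝ) (i j : Fin v) : ℝ :=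
  if h : j < i then w ⟨(i, j), h⟩ else if h : i < j then w ⟨(j, i), h⟩ else 0

/-- The Kronecker-structured Laplacian operator. -/
def LK {v : ℕ} (n : ℕ) (w : PairIdx v → ℝ) :
    Matrix (Fin v × Fin n) (Fin v × Fin n) ℝ :=
  fun p q =>
    if p.1 = q.1 then (if p.2 = q.2 then ∑ k ∈ Finset.univ.erase p.1, wsym w p.1 k else 0)
    else if p.2 = q.2 then -(wsym w p.1 q.1) else 0

lemma wsym_symm {v : ℕ} (w : PairIdx v → ℝ) (i j : Fin v) : wsym w i j = wsym w j i := by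
  unfold wsym
  rcases lt_trichotomy i j with h | h | h
  · rw [dif_neg (not_lt.2 h.le), dif_pos h, dif_pos h]
  · simp [h, lt_irrefl]
  · rw [dif_pos h, dif_pos h, dif_neg (not_lt.2 h.le)]

lemma sum_lt_pairs {v : ℕ} (w : PairIdx v → ℝ) :
    ∑ i : Fin v, ∑ j ∈ Finset.univ.filter (· < i), (wsym w i j) ^ 2
      = ∑ e : PairIdx v, (w e) ^ 2 := by
  classical
  have h1 : ∑ e : PairIdx v, (w e) ^ 2
      = ∑ p ∈ Finset.univ.filter (fun p : Fin v × Fin v => p.2 < p.1),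
          (wsym w p.1 p.2) ^ 2 := by
    rw [Finset.sum_subtype (p := fun p : Fin v × Fin v => p.2 < p.1)
      (Finset.univ.filter fun p : Fin v × Fin v => p.2 < p.1)
      (by simp) (fun p => (wsym w p.1 p.2) ^ 2)]
    apply Finset.sum_congr rfl
    intro e _
    unfold wsym
    rw [dif_pos e.2]
    exact congrArg (fun p => (w p) ^ 2) (Subtype.ext Prod.mk.eta).symm
  rw [h1]
  exact (Finset.sum_finset_product' _ Finset.univ
    (fun i => Finset.univ.filter (· < i)) (by simp)).symm

/-- `‖𝓛_K(w)‖_F² ≤ 2 n v ‖w‖²`, i.e. the operator `𝓛_K^* 𝓛_K` has norm at most `2 n v`. -/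
theorem stmt10 {v n : ℕ} (w : PairIdx v → ℝ) :
    Matrix.trace ((LK n w)ᵀ * LK n w)
      ≤ 2 * (n : ℝ) * (v : ℝ) * ∑ e : PairIdx v, (w e) ^ 2 := by
  classical
  set d : Fin v → ℝ := fun i => ∑ k ∈ Finset.univ.erase i, wsym w i k with hd
  set X : Fin v → Fin v → ℝ := fun i j =>
    if i = j then (d i) ^ 2 else (wsym w i j) ^ 2 with hX
  have hentry : ∀ p q : Fin v × Fin n,
      (LK n w p q) ^ 2 = if p.2 = q.2 then X p.1 q.1 else 0 := by
    intro p q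
    simp only [LK, hX, hd]
    split_ifs <;> simp_all
  have htr : Matrix.trace ((LK n w)ᵀ * LK n w)
      = ∑ q : Fin v × Fin n, ∑ p : Fin v × Fin n, (LK n w p q) ^ 2 := by
    simp [Matrix.trace, Matrix.mul_apply, Matrix.diag, sq]
  have htr2 : Matrix.trace ((LK n w)ᵀ * LK n w)
      = (n : ℝ) * ∑ j : Fin v, ∑ i : Fin v, X i j := by
    rw [htr]
    simp only [hentry]
    rw [Fintype.sum_prod_type]
    simp only [Fintype.sum_prod_type]
    calc ∑ j : Fin v, ∑ b : Fin n, ∑ i : Fin v, ∑ a : Fin n, (if a = b then X i j else 0)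
        = ∑ j : Fin v, ∑ _b : Fin n, ∑ i : Fin v, X i j := by
          apply Finset.sum_congr rfl; intro j _
          apply Finset.sum_congr rfl; intro b _
          apply Finset.sum_congr rfl; intro i _
          simp
      _ = (n : ℝ) * ∑ j : Fin v, ∑ i : Fin v, X i j := by
          rw [Finset.mul_sum]
          apply Finset.sum_congr rfl
          intro j _
          simp [Finset.card_univ, mul_comm]
  have hsplit : ∀ j : Fin v, ∑ i : Fin v, X i j
      = (d j) ^ 2 + ∑ i ∈ Finset.univ.erase j, (wsym w i j) ^ 2 := by
    intro j
    rw [← Finset.add_sum_erase Finset.univ (fun i => X i j) (Finset.mem_univ j)]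
    congr 1
    · simp [hX]
    · apply Finset.sum_congr rfl
      intro i hi
      simp only [hX]
      rw [if_neg (Finset.ne_of_mem_erase hi)]
  set T : ℝ := ∑ j : Fin v, ∑ i ∈ Finset.univ.erase j, (wsym w i j) ^ 2 with hT
  have hTnonneg : 0 ≤ T := by
    apply Finset.sum_nonneg
    intro j _
    exact Finset.sum_nonneg fun i _ => sq_nonneg _
  have hTval : T = 2 * ∑ e : PairIdx v, (w e) ^ 2 := by
    have herase : ∀ j : Fin v, Finset.univ.erase j
        = Finset.univ.filter (· < j) ∪ Finset.univ.filter (j < ·) := by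
      intro j
      ext i
      simp only [Finset.mem_erase, Finset.mem_union, Finset.mem_filter, Finset.mem_univ,
        true_and, and_true]
      exact ⟨fun h => h.lt_or_gt, fun h => h.elim (fun h => h.ne) fun h => h.ne'⟩
    have hdisj : ∀ j : Fin v,
        Disjoint (Finset.univ.filter (· < j)) (Finset.univ.filter (j < ·)) := by
      intro j
      rw [Finset.disjoint_left]
      intro i hi hi2
      simp only [Finset.mem_filter] at hi hi2
      exact lt_asymm hi.2 hi2.2
    have hTs : T = (∑ j : Fin v, ∑ i ∈ Finset.univ.filter (· < j), (wsym w i j) ^ 2)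
        + ∑ j : Fin v, ∑ i ∈ Finset.univ.filter (j < ·), (wsym w i j) ^ 2 := by
      rw [hT, ← Finset.sum_add_distrib]
      apply Finset.sum_congr rfl
      intro j _
      rw [herase j, Finset.sum_union (hdisj j)]
    have hlt : (∑ j : Fin v, ∑ i ∈ Finset.univ.filter (· < j), (wsym w i j) ^ 2)
        = ∑ e : PairIdx v, (w e) ^ 2 := by
      rw [← sum_lt_pairs w]
      apply Finset.sum_congr rfl
      intro j _
      apply Finset.sum_congr rfl
      intro i _
      rw [wsym_symm]
    have hgt : (∑ j : Fin v, ∑ i ∈ Finset.univ.filter (j < ·), (wsym w i j) ^ 2)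
        = ∑ e : PairIdx v, (w e) ^ 2 := by
      rw [← sum_lt_pairs w]
      exact Finset.sum_comm' (fun x y => by simp)
    rw [hTs, hlt, hgt]; ring
  have hdiag : ∑ j : Fin v, (d j) ^ 2 ≤ ((v - 1 : ℕ) : ℝ) * T := by
    have h1 : ∀ j : Fin v, (d j) ^ 2
        ≤ ((v - 1 : ℕ) : ℝ) * ∑ k ∈ Finset.univ.erase j, (wsym w j k) ^ 2 := by
      intro j
      have := sq_sum_le_card_mul_sum_sq (s := Finset.univ.erase j)
        (f := fun k => wsym w j k)
      simpa [hd, Finset.card_erase_of_mem, Finset.card_univ] using this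
    calc ∑ j : Fin v, (d j) ^ 2
        ≤ ∑ j : Fin v, ((v - 1 : ℕ) : ℝ) * ∑ k ∈ Finset.univ.erase j, (wsym w j k) ^ 2 :=
          Finset.sum_le_sum fun j _ => h1 j
      _ = ((v - 1 : ℕ) : ℝ) * T := by
          rw [hT, ← Finset.mul_sum]
          congr 1
          exact Finset.sum_congr rfl fun j _ => Finset.sum_congr rfl fun k _ => by
            rw [wsym_symm]
  rw [htr2]
  have hsum : ∑ j : Fin v, ∑ i : Fin v, X i j = (∑ j : Fin v, (d j) ^ 2) + T := by
    rw [hT, ← Finset.sum_add_distrib]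
    exact Finset.sum_congr rfl fun j _ => hsplit j
  rw [hsum]
  rcases Nat.eq_zero_or_pos v with hv | hv
  · subst hv
    simp [hT]
  · have hcast : ((v - 1 : ℕ) : ℝ) = (v : ℝ) - 1 := by
      push_cast [Nat.one_le_iff_ne_zero.2 hv.ne']
      ring
    have hn : (0 : ℝ) ≤ (n : ℝ) := Nat.cast_nonneg n
    have : (∑ j : Fin v, (d j) ^ 2) + T ≤ (v : ℝ) * T := by
      rw [hcast] at hdiag
      nlinarith [hdiag]
    calc (n : ℝ) * ((∑ j : Fin v, (d j) ^ 2) + T) ≤ (n : ℝ) * ((v : ℝ) * T) := by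
          exact mul_le_mul_of_nonneg_left this hn
      _ = 2 * (n : ℝ) * (v : ℝ) * ∑ e : PairIdx v, (w e) ^ 2 := by rw [hTval]; ring
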